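/- Soundness of the quadripartite embedding formulation. Let P, L be positive integers, M = 2P, and let G be a finite simple graph. Suppose there exist sets A1, A2, A3, A4 ⊆ V(G) such that: (i) A1 ∪ A2 ∪ A3 ∪ A4 = V(G); (ii) |A1| ≤ P·L, |A2| ≤ M·L, |A3| ≤ M·L, |A4| ≤ P·L; (iii) for every vertex v, the index set {k ∈ {1,2,3,4} : v ∈ Ak} is a set of consecutive integers (no gaps); and (iv) for every edge {u,v} of G, either (u ∈ A1 and v ∈ A2), or (u ∈ A2 and v ∈ A1), or (u ∈ A3 and v ∈ A4), or (u ∈ A4 and v ∈ A3). Then G is a minor of the quadripartite template graph Q_{P,L} (and hence a minor of the Chimera graph C_{M,M,L}). -/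

import Mathlib

/-- A minor model of `G` in `H`: a family of pairwise disjoint nonempty branch sets,
each inducing a connected subgraph of `H`, with an edge of `H` joining the branch sets
of any two adjacent vertices of `G`. -/
structure MinorModel {V W : Type*} (G : SimpleGraph V) (H : SimpleGraph W) where
  B : V → Set W
  nonempty : ∀ v, (B v).Nonempty
  pairwiseDisjoint : ∀ ⦃u v : V⦄, u ≠ v → Disjoint (B u) (B v)
  connected : ∀ v, (H.induce (B v)).Connected
  edge : ∀ ⦃u v : V⦄, G.Adj u v → ∃ x ∈ B u, ∃ y ∈ B v, H.Adj x y

/-- `G` is a minor of `H`. -/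
def SimpleGraph.IsMinorOf {V W : Type*} (G : SimpleGraph V) (H : SimpleGraph W) : Prop :=
  Nonempty (MinorModel G H)

/-- A bipartite assignment of `G` into the complete bipartite graph `K_{m1,m2}`. -/
def SimpleGraph.BipartiteAssignment {V : Type*} (G : SimpleGraph V) (m1 m2 : ℕ)
    (A1 A2 : Set V) : Prop :=
  A1 ∪ A2 = Set.univ ∧ A1.ncard ≤ m1 ∧ A2.ncard ≤ m2 ∧
    ∀ ⦃u v : V⦄, G.Adj u v → (u ∈ A1 ∧ v ∈ A2) ∨ (u ∈ A2 ∧ v ∈ A1)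

/-- `G − S` is bipartite, i.e. `S` is an odd cycle transversal of `G`. -/
def SimpleGraph.DelBipartite {V : Type*} (G : SimpleGraph V) (S : Set V) : Prop :=
  ∃ X Y : Set V, Disjoint X Y ∧ X ∪ Y = Sᶜ ∧
    ∀ ⦃u v : V⦄, G.Adj u v → u ∉ S → v ∉ S → (u ∈ X ∧ v ∈ Y) ∨ (u ∈ Y ∧ v ∈ X)

/-- The Chimera graph `C_{M,M,L}`. A vertex `(i, j, s, l)` consists of a row `i`, a
column `j`, a side `s` (`false` = left, `true` = right), and an index `l`.
Edges: within each cell, every left vertex is adjacent to every right vertex;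
left vertices with the same column and index and rows differing by 1 are adjacent;
right vertices with the same row and index and columns differing by 1 are adjacent. -/
def chimera (M L : ℕ) : SimpleGraph (Fin M × Fin M × Bool × Fin L) :=
  SimpleGraph.fromRel fun x y =>
    (x.1 = y.1 ∧ x.2.1 = y.2.1 ∧ x.2.2.1 = false ∧ y.2.2.1 = true) ∨
    (x.2.2.1 = false ∧ y.2.2.1 = false ∧ x.2.1 = y.2.1 ∧ x.2.2.2 = y.2.2.2 ∧
      ((x.1 : ℕ) + 1 = (y.1 : ℕ) ∨ (y.1 : ℕ) + 1 = (x.1 : ℕ))) ∨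
    (x.2.2.1 = true ∧ y.2.2.1 = true ∧ x.1 = y.1 ∧ x.2.2.2 = y.2.2.2 ∧
      ((x.2.1 : ℕ) + 1 = (y.2.1 : ℕ) ∨ (y.2.1 : ℕ) + 1 = (x.2.1 : ℕ)))

/-- The vertex set of the quadripartite template graph `Q_{P,L}`:
the four parts `U1, U2, U3, U4` with `|U1| = |U4| = P·L` and `|U2| = |U3| = 2·P·L`. -/
def QVert (P L : ℕ) : Type :=
  Fin (P * L) ⊕ Fin (2 * P * L) ⊕ Fin (2 * P * L) ⊕ Fin (P * L)

/-- The quadripartite template graph `Q_{P,L}`: every vertex of `U1` is adjacent to every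
vertex of `U2`, every vertex of `U3` is adjacent to every vertex of `U4`, and the `i`-th
vertex of `U2` is adjacent to the `i`-th vertex of `U3` (a perfect matching). -/
def qte (P L : ℕ) : SimpleGraph (QVert P L) :=
  SimpleGraph.fromRel fun x y =>
    match x, y with
    | Sum.inl _, Sum.inr (Sum.inl _) => True
    | Sum.inr (Sum.inl i), Sum.inr (Sum.inr (Sum.inl j)) => i = j
    | Sum.inr (Sum.inr (Sum.inl _)), Sum.inr (Sum.inr (Sum.inr _)) => True
    | _, _ => False

/-
A vertex `v` of `G` is modelled in `Q_{P,L}` by one vertex in each part `U_k` with `v ∈ A_k`: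
injective labels of `A1` in `U1` and of `A4` in `U4`, and one label `g v` used in both `U2` and
`U3`, where `g` is injective on `A2` and on `A3` separately. These vertices lie on the path
`U1 – U2 – U3 – U4` whose middle edge is the matching edge at `g v`, and the indices `k` with
`v ∈ A_k` form an interval, so the branch set of `v` is the image of a subpath and is connected.
Every edge of `G` runs between `A1` and `A2` or between `A3` and `A4`, where `Q_{P,L}` is
complete bipartite.

`Q_{P,L}` is itself a minor of `C_{2P,2P,L}`: contract the vertical left paths of the columns
`j < P` to `U1` and of the columns `j ≥ P` to `U4`, and split each horizontal right path between
columns `P - 1` and `P` into a vertex of `U2` and its matched vertex in `U3`. Minors compose.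
-/

open SimpleGraph Set

theorem Set.exists_injOn_of_ncard_le {α β : Type*} [Finite α] [Finite β] [Nonempty β]
    {s : Set α} (hs : s.ncard ≤ Nat.card β) : ∃ f : α → β, InjOn f s := by
  obtain ⟨f, -, hf⟩ := s.toFinite.exists_injOn_of_encard_le (t := (univ : Set β)) (by
    rw [← s.toFinite.cast_ncard_eq, encard_univ, ENat.card_eq_coe_natCard]
    exact_mod_cast hs)
  exact ⟨f, hf⟩

theorem Set.exists_injOn_injOn_of_ncard_le {α β : Type*} [Finite α] [Finite β] [Nonempty β]
    {s t : Set α} (hs : s.ncard ≤ Nat.card β) (ht : t.ncard ≤ Nat.card β) :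
    ∃ f : α → β, InjOn f s ∧ InjOn f t := by
  classical
  obtain ⟨f, hf⟩ := exists_injOn_of_ncard_le hs
  -- Keep `f` on `s` and give `t \ s` labels outside `f '' (t ∩ s)`.
  have hcard : (t \ s).ncard ≤ (f '' (t ∩ s))ᶜ.ncard := by
    have h1 := ncard_inter_add_ncard_sdiff_eq_ncard t s
    have h2 := ncard_add_ncard_compl (f '' (t ∩ s))
    rw [(hf.mono inter_subset_right).ncard_image] at h2
    omega
  obtain ⟨g, hgu, hg⟩ := (t \ s).toFinite.exists_injOn_of_encard_le (t := (f '' (t ∩ s))ᶜ) (by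
    rw [← (t \ s).toFinite.cast_ncard_eq, ← (toFinite _).cast_ncard_eq]
    exact_mod_cast hcard)
  refine ⟨s.piecewise f g, hf.congr (piecewise_eqOn s f g).symm, ?_⟩
  rw [← inter_union_sdiff t s, injOn_union disjoint_sdiff_inter.symm]
  refine ⟨(hf.mono inter_subset_right).congr ?_, hg.congr ?_, ?_⟩
  · exact fun x hx => (piecewise_eq_of_mem s f g hx.2).symm
  · exact fun x hx => (piecewise_eq_of_notMem s f g hx.2).symm
  · rintro x hx y hy hxy
    rw [piecewise_eq_of_mem s f g hx.2, piecewise_eq_of_notMem s f g hy.2] at hxy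
    exact hgu hy ⟨x, hx, hxy⟩

namespace SimpleGraph

variable {V W : Type*}

theorem Connected.induce_image {G : SimpleGraph V} {K : SimpleGraph W} (f : G →g K) {s : Set V}
    (h : (G.induce s).Connected) : (K.induce (f '' s)).Connected :=
  h.map (induceHom f (mapsTo_image f s)) (surjective_mapsTo_image_restrict f s)

theorem connected_induce_pathGraph_of_ordConnected {n : ℕ} {I : Set (Fin n)} (hI : I.OrdConnected)
    (hne : I.Nonempty) : ((pathGraph n).induce I).Connected := by
  have hreach : ∀ (k : ℕ) (a b : Fin n) (ha : a ∈ I) (hb : b ∈ I), (b : ℕ) = a + k →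
      ((pathGraph n).induce I).Reachable ⟨a, ha⟩ ⟨b, hb⟩ := by
    intro k
    induction k with
    | zero => intro a b ha hb hab; cases Fin.ext hab; rfl
    | succ k ih =>
      intro a b ha hb hab
      have hb' : (⟨b - 1, by omega⟩ : Fin n) ∈ I :=
        hI.out ha hb ⟨Fin.le_def.2 (by simp; omega), Fin.le_def.2 (by simp)⟩
      refine (ih a _ ha hb' (by simp; omega)).trans (Adj.reachable ?_)
      exact pathGraph_adj.2 (Or.inl (by simp; omega))
  refine (connected_iff _).2 ⟨fun ⟨a, ha⟩ ⟨b, hb⟩ => ?_, hne.to_subtype⟩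
  rcases le_total a b with hab | hba
  · exact hreach (b - a) a b ha hb (by omega)
  · exact (hreach (a - b) b a hb ha (by omega)).symm

end SimpleGraph

namespace MinorModel

variable {U V W : Type*} {G : SimpleGraph U} {H : SimpleGraph V} {K : SimpleGraph W}

theorem connected_induce_biUnion (m : MinorModel H K) {T : Set V} (hT : (H.induce T).Connected) :
    (K.induce (⋃ w ∈ T, m.B w)).Connected := by
  set S := ⋃ w ∈ T, m.B w
  have hsub : ∀ w ∈ T, m.B w ⊆ S := fun w hw => subset_biUnion_of_mem (u := m.B) hw
  have hwithin : ∀ w ∈ T, ∀ x y : S, x.1 ∈ m.B w → y.1 ∈ m.B w → (K.induce S).Reachable x y :=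
    fun w hw x y hx hy =>
      ((m.connected w).preconnected ⟨x, hx⟩ ⟨y, hy⟩).map (K.induceHomOfLE (hsub w hw)).toHom
  have hreach : ∀ a b : T, (H.induce T).Reachable a b →
      ∀ x y : S, x.1 ∈ m.B a → y.1 ∈ m.B b → (K.induce S).Reachable x y := by
    intro a b hab
    rw [reachable_iff_reflTransGen] at hab
    induction hab with
    | refl => exact fun x y hx hy => hwithin a a.2 x y hx hy
    | tail _ hbc ih =>
      intro x y hx hy
      obtain ⟨x', hx', y', hy', hxy'⟩ := m.edge hbc
      let x'' : S := ⟨x', hsub _ (Subtype.prop _) hx'⟩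
      let y'' : S := ⟨y', hsub _ (Subtype.prop _) hy'⟩
      have hxy'' : (K.induce S).Adj x'' y'' := hxy'
      exact ((ih x x'' hx hx').trans hxy''.reachable).trans
        (hwithin _ (Subtype.prop _) y'' y hy' hy)
  obtain ⟨w, hw⟩ := hT.nonempty
  obtain ⟨x, hx⟩ := m.nonempty w
  refine (connected_iff _).2 ⟨fun x y => ?_, ⟨⟨x, hsub w hw hx⟩⟩⟩
  obtain ⟨a, ha, hxa⟩ := mem_iUnion₂.1 x.2
  obtain ⟨b, hb, hyb⟩ := mem_iUnion₂.1 y.2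
  exact hreach ⟨a, ha⟩ ⟨b, hb⟩ (hT.preconnected _ _) x y hxa hyb

def comp (m₁ : MinorModel G H) (m₂ : MinorModel H K) : MinorModel G K where
  B u := ⋃ w ∈ m₁.B u, m₂.B w
  nonempty u := nonempty_coe_sort.1 (m₂.connected_induce_biUnion (m₁.connected u)).nonempty
  pairwiseDisjoint u v huv := by
    simp only [disjoint_iUnion_left, disjoint_iUnion_right]
    exact fun a ha b hb => m₂.pairwiseDisjoint ((m₁.pairwiseDisjoint huv).ne_of_mem hb ha)
  connected u := m₂.connected_induce_biUnion (m₁.connected u)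
  edge u v huv := by
    obtain ⟨a, ha, b, hb, hab⟩ := m₁.edge huv
    obtain ⟨x, hx, y, hy, hxy⟩ := m₂.edge hab
    exact ⟨x, mem_biUnion ha hx, y, mem_biUnion hb hy, hxy⟩

end MinorModel

namespace SimpleGraph

variable {U V W : Type*} {G : SimpleGraph U} {H : SimpleGraph V} {K : SimpleGraph W}

theorem IsMinorOf.trans (hGH : G.IsMinorOf H) (hHK : H.IsMinorOf K) : G.IsMinorOf K :=
  let ⟨m₁⟩ := hGH
  let ⟨m₂⟩ := hHK
  ⟨m₁.comp m₂⟩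

theorem isMinorOf_of_connected_fibers (π : V → U) (hconn : ∀ u, (H.induce (π ⁻¹' {u})).Connected)
    (hedge : ∀ ⦃u u'⦄, G.Adj u u' → ∃ x y, π x = u ∧ π y = u' ∧ H.Adj x y) : G.IsMinorOf H :=
  ⟨{ B u := π ⁻¹' {u}
     nonempty u := nonempty_coe_sort.1 (hconn u).nonempty
     pairwiseDisjoint u u' h := (disjoint_singleton.2 h).preimage π
     connected := hconn
     edge u u' h := by
       obtain ⟨x, y, rfl, rfl, hxy⟩ := hedge h
       exact ⟨x, rfl, y, rfl, hxy⟩ }⟩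

end SimpleGraph

section Chimera

variable {M L : ℕ}

theorem chimera_adj_left_right (i j : Fin M) (l l' : Fin L) :
    (chimera M L).Adj (i, j, false, l) (i, j, true, l') := by
  simp [chimera]

def chimeraColumn (j : Fin M) (l : Fin L) : pathGraph M →g chimera M L where
  toFun i := (i, j, false, l)
  map_rel' {a b} h := by
    have := pathGraph_adj.1 h
    simp [chimera, h.ne]
    omega

def chimeraRow (i : Fin M) (l : Fin L) : pathGraph M →g chimera M L where
  toFun j := (i, j, true, l)
  map_rel' {a b} h := by
    have := pathGraph_adj.1 h
    simp [chimera, h.ne]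
    omega

end Chimera

section QuadripartiteTemplate

/-- The contraction of `C_{2P,2P,L}` onto `Q_{P,L}`. Its codomain is `QVert P L` spelt out, so
that `simp` sees the `Sum` constructors. -/
def chimeraToQte (P L : ℕ) : Fin (2 * P) × Fin (2 * P) × Bool × Fin L →
    Fin (P * L) ⊕ Fin (2 * P * L) ⊕ Fin (2 * P * L) ⊕ Fin (P * L)
  | (i, j, s, l) =>
    if h : (j : ℕ) < P then
      if s then .inr (.inl (finProdFinEquiv (i, l))) else .inl (finProdFinEquiv (⟨j, h⟩, l))
    else
      if s then .inr (.inr (.inl (finProdFinEquiv (i, l))))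
      else .inr (.inr (.inr (finProdFinEquiv (⟨j - P, by omega⟩, l))))

variable {P L : ℕ}

theorem chimeraToQte_preimage_inl (r : Fin P) (l : Fin L) :
    chimeraToQte P L ⁻¹' {.inl (finProdFinEquiv (r, l))} =
      chimeraColumn ⟨r, by omega⟩ l '' univ := by
  ext ⟨i, j, s, l'⟩
  cases s <;> by_cases h : (j : ℕ) < P <;>
    simp [chimeraToQte, chimeraColumn, h, Fin.ext_iff] <;> omega

theorem chimeraToQte_preimage_inr_inl (i : Fin (2 * P)) (l : Fin L) :
    chimeraToQte P L ⁻¹' {.inr (.inl (finProdFinEquiv (i, l)))} =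
      chimeraRow i l '' {j | (j : ℕ) < P} := by
  ext ⟨i', j, s, l'⟩
  cases s <;> by_cases h : (j : ℕ) < P <;> simp [chimeraToQte, chimeraRow, h, eq_comm]

theorem chimeraToQte_preimage_inr_inr_inl (i : Fin (2 * P)) (l : Fin L) :
    chimeraToQte P L ⁻¹' {.inr (.inr (.inl (finProdFinEquiv (i, l))))} =
      chimeraRow i l '' {j | P ≤ (j : ℕ)} := by
  ext ⟨i', j, s, l'⟩
  cases s <;> by_cases h : (j : ℕ) < P <;> simp [chimeraToQte, chimeraRow, h, eq_comm]
  omega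

theorem chimeraToQte_preimage_inr_inr_inr (r : Fin P) (l : Fin L) :
    chimeraToQte P L ⁻¹' {.inr (.inr (.inr (finProdFinEquiv (r, l))))} =
      chimeraColumn ⟨P + r, by omega⟩ l '' univ := by
  ext ⟨i, j, s, l'⟩
  cases s <;> by_cases h : (j : ℕ) < P <;>
    simp [chimeraToQte, chimeraColumn, h, Fin.ext_iff] <;> omega

theorem exists_chimera_adj_of_qte_adj (hP : 0 < P) {q q' : QVert P L} (h : (qte P L).Adj q q') :
    ∃ x y, chimeraToQte P L x = q ∧ chimeraToQte P L y = q' ∧ (chimera (2 * P) L).Adj x y := by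
  have cell12 : ∀ a b, ∃ x y, chimeraToQte P L x = .inl a ∧ chimeraToQte P L y = .inr (.inl b) ∧
      (chimera (2 * P) L).Adj x y := by
    intro a b
    obtain ⟨⟨r, l⟩, rfl⟩ := finProdFinEquiv.surjective a
    obtain ⟨⟨i, l'⟩, rfl⟩ := finProdFinEquiv.surjective b
    exact ⟨(i, ⟨r, by omega⟩, false, l), (i, ⟨r, by omega⟩, true, l'), by simp [chimeraToQte],
      by simp [chimeraToQte], chimera_adj_left_right _ _ _ _⟩
  have row23 : ∀ b, ∃ x y, chimeraToQte P L x = .inr (.inl b) ∧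
      chimeraToQte P L y = .inr (.inr (.inl b)) ∧ (chimera (2 * P) L).Adj x y := by
    intro b
    obtain ⟨⟨i, l⟩, rfl⟩ := finProdFinEquiv.surjective b
    exact ⟨(i, ⟨P - 1, by omega⟩, true, l), (i, ⟨P, by omega⟩, true, l),
      by simp [chimeraToQte]; omega, by simp [chimeraToQte],
      (chimeraRow i l).map_adj (pathGraph_adj.2 (Or.inl (by simp; omega)))⟩
  have cell34 : ∀ c d, ∃ x y, chimeraToQte P L x = .inr (.inr (.inl c)) ∧
      chimeraToQte P L y = .inr (.inr (.inr d)) ∧ (chimera (2 * P) L).Adj x y := by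
    intro c d
    obtain ⟨⟨i, l⟩, rfl⟩ := finProdFinEquiv.surjective c
    obtain ⟨⟨r, l'⟩, rfl⟩ := finProdFinEquiv.surjective d
    exact ⟨(i, ⟨P + r, by omega⟩, true, l), (i, ⟨P + r, by omega⟩, false, l'),
      by simp [chimeraToQte], by simp [chimeraToQte], (chimera_adj_left_right _ _ _ _).symm⟩
  have swap : ∀ {q q' : QVert P L}, (∃ x y, chimeraToQte P L x = q ∧ chimeraToQte P L y = q' ∧
      (chimera (2 * P) L).Adj x y) → ∃ x y, chimeraToQte P L x = q' ∧ chimeraToQte P L y = q ∧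
      (chimera (2 * P) L).Adj x y :=
    fun ⟨x, y, hx, hy, hxy⟩ => ⟨y, x, hy, hx, hxy.symm⟩
  rw [qte, fromRel_adj] at h
  obtain ⟨-, h⟩ := h
  rcases q with a | b | c | d <;> rcases q' with a' | b' | c' | d' <;>
    simp only [or_false, false_or, or_self] at h
  · exact cell12 a b'
  · exact swap (cell12 a' b)
  · exact h ▸ row23 b
  · exact h ▸ swap (row23 b')
  · exact cell34 c d'
  · exact swap (cell34 c' d)

theorem connected_induce_chimeraToQte_preimage (hP : 0 < P) :
    ∀ q, ((chimera (2 * P) L).induce (chimeraToQte P L ⁻¹' {q})).Connected := by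
  have : Nonempty (Fin (2 * P)) := ⟨⟨0, by omega⟩⟩
  have column : ∀ j l, ((chimera (2 * P) L).induce (chimeraColumn j l '' univ)).Connected :=
    fun j l =>
      (connected_induce_pathGraph_of_ordConnected ordConnected_univ univ_nonempty).induce_image _
  rintro (a | b | c | d)
  · obtain ⟨⟨r, l⟩, rfl⟩ := finProdFinEquiv.surjective a
    rw [chimeraToQte_preimage_inl]
    exact column _ _
  · obtain ⟨⟨i, l⟩, rfl⟩ := finProdFinEquiv.surjective b
    rw [chimeraToQte_preimage_inr_inl]
    exact (connected_induce_pathGraph_of_ordConnected (I := {j | (j : ℕ) < P})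
      ⟨fun _ _ _ hb _ hc => (Fin.le_def.1 hc.2).trans_lt hb⟩ ⟨⟨0, by omega⟩, hP⟩).induce_image _
  · obtain ⟨⟨i, l⟩, rfl⟩ := finProdFinEquiv.surjective c
    rw [chimeraToQte_preimage_inr_inr_inl]
    exact (connected_induce_pathGraph_of_ordConnected (I := {j | P ≤ (j : ℕ)})
      ⟨fun _ ha _ _ _ hc => ha.trans (Fin.le_def.1 hc.1)⟩ ⟨⟨P, by omega⟩, le_refl P⟩).induce_image _
  · obtain ⟨⟨r, l⟩, rfl⟩ := finProdFinEquiv.surjective d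
    rw [chimeraToQte_preimage_inr_inr_inr]
    exact column _ _

theorem qte_isMinorOf_chimera (hP : 0 < P) : (qte P L).IsMinorOf (chimera (2 * P) L) :=
  isMinorOf_of_connected_fibers (chimeraToQte P L) (connected_induce_chimeraToQte_preimage hP)
    fun _ _ => exists_chimera_adj_of_qte_adj hP

theorem qte_adj_part1_part2 (a : Fin (P * L)) (b : Fin (2 * P * L)) :
    (qte P L).Adj (.inl a) (.inr (.inl b)) :=
  (fromRel_adj _ _ _).2 ⟨nofun, .inl trivial⟩

theorem qte_adj_matching (b : Fin (2 * P * L)) :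
    (qte P L).Adj (.inr (.inl b)) (.inr (.inr (.inl b))) :=
  (fromRel_adj _ _ _).2 ⟨nofun, .inl rfl⟩

theorem qte_adj_part3_part4 (c : Fin (2 * P * L)) (d : Fin (P * L)) :
    (qte P L).Adj (.inr (.inr (.inl c))) (.inr (.inr (.inr d))) :=
  (fromRel_adj _ _ _).2 ⟨nofun, .inl trivial⟩

def qtePath (a : Fin (P * L)) (b : Fin (2 * P * L)) (d : Fin (P * L)) : pathGraph 4 →g qte P L where
  toFun := ![.inl a, .inr (.inl b), .inr (.inr (.inl b)), .inr (.inr (.inr d))]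
  map_rel' {i j} h := by
    rw [pathGraph_adj] at h
    fin_cases i <;> fin_cases j <;> simp at h ⊢
    exacts [qte_adj_part1_part2 a b, (qte_adj_part1_part2 a b).symm, qte_adj_matching b,
      (qte_adj_matching b).symm, qte_adj_part3_part4 b d, (qte_adj_part3_part4 b d).symm]

theorem ordConnected_setOf_mem_of_gapFree {V : Type*} {A1 A2 A3 A4 : Set V} {v : V}
    (h13 : v ∈ A1 ∧ v ∈ A3 → v ∈ A2) (h14 : v ∈ A1 ∧ v ∈ A4 → v ∈ A2 ∧ v ∈ A3)
    (h24 : v ∈ A2 ∧ v ∈ A4 → v ∈ A3) : {k : Fin 4 | v ∈ ![A1, A2, A3, A4] k}.OrdConnected := by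
  refine ⟨fun i hi j hj k hk => ?_⟩
  fin_cases i <;> fin_cases j <;> fin_cases k <;> simp_all [Fin.le_def]

theorem isMinorOf_qte {V : Type*} [Finite V] (G : SimpleGraph V) (hP : 0 < P) (hL : 0 < L)
    {A1 A2 A3 A4 : Set V} (hcover : A1 ∪ A2 ∪ A3 ∪ A4 = univ)
    (hc1 : A1.ncard ≤ P * L) (hc2 : A2.ncard ≤ 2 * P * L)
    (hc3 : A3.ncard ≤ 2 * P * L) (hc4 : A4.ncard ≤ P * L)
    (hconsec : ∀ v, {k : Fin 4 | v ∈ ![A1, A2, A3, A4] k}.OrdConnected)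
    (hedge : ∀ ⦃u v : V⦄, G.Adj u v →
      (u ∈ A1 ∧ v ∈ A2) ∨ (u ∈ A2 ∧ v ∈ A1) ∨ (u ∈ A3 ∧ v ∈ A4) ∨ (u ∈ A4 ∧ v ∈ A3)) :
    G.IsMinorOf (qte P L) := by
  have : Nonempty (Fin (P * L)) := ⟨⟨0, by positivity⟩⟩
  have : Nonempty (Fin (2 * P * L)) := ⟨⟨0, by positivity⟩⟩
  obtain ⟨f1, hf1⟩ := exists_injOn_of_ncard_le (β := Fin (P * L)) (by simpa using hc1)
  obtain ⟨f4, hf4⟩ := exists_injOn_of_ncard_le (β := Fin (P * L)) (by simpa using hc4)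
  obtain ⟨g, hg2, hg3⟩ :=
    exists_injOn_injOn_of_ncard_le (β := Fin (2 * P * L)) (by simpa using hc2) (by simpa using hc3)
  let path v := qtePath (f1 v) (g v) (f4 v)
  let I v := {k : Fin 4 | v ∈ ![A1, A2, A3, A4] k}
  have hI : ∀ v, (I v).Nonempty := by
    intro v
    have hv : v ∈ A1 ∪ A2 ∪ A3 ∪ A4 := hcover ▸ mem_univ v
    simp only [mem_union] at hv
    rcases hv with ((h | h) | h) | h
    exacts [⟨0, h⟩, ⟨1, h⟩, ⟨2, h⟩, ⟨3, h⟩]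
  have mem : ∀ {v} k, v ∈ ![A1, A2, A3, A4] k → path v k ∈ path v '' I v :=
    fun k hk => mem_image_of_mem _ hk
  refine ⟨⟨fun v => path v '' I v, fun v => ?_, fun u v huv => ?_, fun v => ?_, fun u v huv => ?_⟩⟩
  · exact (hI v).image _
  · rw [Set.disjoint_left]
    rintro x ⟨k, hk, rfl⟩ ⟨k', hk', heq⟩
    apply huv
    -- `QVert` has to be unfolded before `simp` can compare `Sum` constructors.
    fin_cases k <;> fin_cases k' <;> simp [path, qtePath] at heq <;> dsimp only [QVert] at heq <;>
      simp at heq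
    exacts [hf1 hk hk' heq.symm, hg2 hk hk' heq.symm, hg3 hk hk' heq.symm, hf4 hk hk' heq.symm]
  · exact (connected_induce_pathGraph_of_ordConnected (hconsec v) (hI v)).induce_image _
  · rcases hedge huv with ⟨hu, hv⟩ | ⟨hu, hv⟩ | ⟨hu, hv⟩ | ⟨hu, hv⟩
    · exact ⟨_, mem 0 hu, _, mem 1 hv, qte_adj_part1_part2 _ _⟩
    · exact ⟨_, mem 1 hu, _, mem 0 hv, (qte_adj_part1_part2 _ _).symm⟩
    · exact ⟨_, mem 2 hu, _, mem 3 hv, qte_adj_part3_part4 _ _⟩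
    · exact ⟨_, mem 3 hu, _, mem 2 hv, (qte_adj_part3_part4 _ _).symm⟩

end QuadripartiteTemplate

/-- soundness of the quadripartite embedding formulation: if the vertices
of a finite simple graph `G` can be assigned to sets `A1, A2, A3, A4` covering `V(G)`,
with `|A1| ≤ P·L`, `|A2| ≤ 2P·L`, `|A3| ≤ 2P·L`, `|A4| ≤ P·L`, such that each vertex is
assigned to a consecutive range of partitions (no gaps), and every edge `{u,v}` of `G` is
realized with `u ∈ A1 ∧ v ∈ A2`, or `u ∈ A2 ∧ v ∈ A1`, or `u ∈ A3 ∧ v ∈ A4`, or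
`u ∈ A4 ∧ v ∈ A3`, then `G` is a minor of `Q_{P,L}` (and hence of `C_{2P,2P,L}`). -/
theorem stmt15 {V : Type*} [Fintype V] (G : SimpleGraph V) (P L : ℕ)
    (hP : 0 < P) (hL : 0 < L) (A1 A2 A3 A4 : Set V)
    (hcover : A1 ∪ A2 ∪ A3 ∪ A4 = Set.univ)
    (hc1 : A1.ncard ≤ P * L) (hc2 : A2.ncard ≤ 2 * P * L)
    (hc3 : A3.ncard ≤ 2 * P * L) (hc4 : A4.ncard ≤ P * L)
    (hconsec : ∀ v : V,
      (v ∈ A1 ∧ v ∈ A3 → v ∈ A2) ∧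
      (v ∈ A1 ∧ v ∈ A4 → v ∈ A2 ∧ v ∈ A3) ∧
      (v ∈ A2 ∧ v ∈ A4 → v ∈ A3))
    (hedge : ∀ ⦃u v : V⦄, G.Adj u v →
      (u ∈ A1 ∧ v ∈ A2) ∨ (u ∈ A2 ∧ v ∈ A1) ∨
      (u ∈ A3 ∧ v ∈ A4) ∨ (u ∈ A4 ∧ v ∈ A3)) :
    G.IsMinorOf (qte P L) ∧ G.IsMinorOf (chimera (2 * P) L) :=
  have hQ := isMinorOf_qte G hP hL hcover hc1 hc2 hc3 hc4
    (fun v => ordConnected_setOf_mem_of_gapFree (hconsec v).1 (hconsec v).2.1 (hconsec v).2.2) hedge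
  ⟨hQ, hQ.trans (qte_isMinorOf_chimera hP)⟩
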